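/- For every integer P≥2, every spooky pebbling strategy on the grid DAG G◇_P has pebbling cost at least P+1. -/

import Mathlib

/-!
For a vertex `u`, let `θ u` be the last time before `u` is needed at which `u` gets pebbled,
where `u` is needed when its latest successor is pebbled (a root: at the end). Then `u` is
pebbled throughout `[θ u, θ s)` for every successor `s`, and every non-root has a successor with
larger `θ`. Take `w` on the antidiagonal of level `P - 1` with `θ w` maximal and look at time
`θ w`. The set `X` of vertices with `θ > θ w` lies strictly above the antidiagonal and meets
every level `P, …, 2P - 2`, and every predecessor of `X` outside `X` is pebbled. Since `k`
vertices off the left and bottom borders of the grid have at least `k + 1` predecessors, there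
are at least `P` such predecessors, and a predecessor of `w`, pebbled when `w` was, is one more.
-/

variable {V : Type*}

/-- The set of roots (vertices with out-degree 0) of the graph with edge relation `E`. -/
noncomputable def rootFinset [Finite V] (E : V → V → Prop) : Finset V :=
  (Set.toFinite {v | ∀ w, ¬ E v w}).toFinset

/-- One move of the irreversible pebble game: pebble a vertex whose direct
predecessors are all pebbled, or unpebble any vertex. -/
def IrrevStep [DecidableEq V] (E : V → V → Prop) (A B : Finset V) : Prop :=
  ∃ v : V, (B = insert v A ∧ ∀ w, E w v → w ∈ A) ∨ B = A.erase v

/-- An irreversible pebbling strategy with pebbling time `T`. -/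
def IsIrrevStrategy [Finite V] [DecidableEq V] (E : V → V → Prop)
    (P : ℕ → Finset V) (T : ℕ) : Prop :=
  P 0 = ∅ ∧ P T = rootFinset E ∧
    ∀ t, 1 ≤ t → t ≤ T → IrrevStep E (P (t - 1)) (P t)

/-- One move of the spooky pebble game: pebble, unpebble, ghost or unghost. -/
def SpookyStep [DecidableEq V] (E : V → V → Prop) (A B SA SB : Finset V) : Prop :=
  ∃ v : V,
    (B = insert v A ∧ SB = SA ∧ ∀ w, E w v → w ∈ A) ∨
    (B = A.erase v ∧ SB = SA ∧ ∀ w, E w v → w ∈ A) ∨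
    (B = A.erase v ∧ SB = insert v SA) ∨
    (B = insert v A ∧ SB = SA.erase v ∧ ∀ w, E w v → w ∈ A)

/-- A spooky pebbling sub-strategy: the move rules hold, with no boundary conditions. -/
def IsSpookySubStrategy [DecidableEq V] (E : V → V → Prop)
    (P S : ℕ → Finset V) (T : ℕ) : Prop :=
  ∀ t, 1 ≤ t → t ≤ T → SpookyStep E (P (t - 1)) (P t) (S (t - 1)) (S t)

/-- A spooky pebbling strategy with pebbling time `T`. -/
def IsSpookyStrategy [Finite V] [DecidableEq V] (E : V → V → Prop)
    (P S : ℕ → Finset V) (T : ℕ) : Prop :=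
  P 0 = ∅ ∧ S 0 = ∅ ∧ P T = rootFinset E ∧ S T = ∅ ∧
    IsSpookySubStrategy E P S T

/-- The pebbling cost of a strategy of time `T`: the maximal number of pebbles used. -/
def pebCost (P : ℕ → Finset V) (T : ℕ) : ℕ :=
  (Finset.range (T + 1)).sup fun t => (P t).card

/-- The ghosting cost of a spooky strategy of time `T`: the maximal number of ghosts used. -/
def ghostCost (S : ℕ → Finset V) (T : ℕ) : ℕ :=
  (Finset.range (T + 1)).sup fun t => (S t).card

/-- Acyclicity of the edge relation: no directed cycles. -/
def Acyclic (E : V → V → Prop) : Prop := ∀ v, ¬ Relation.TransGen E v v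

/-- The grid DAG `G◇_P` on vertex set `Fin P × Fin P` (0-indexed, so the leaf “(1,1)”
is `(0,0)` and the root “(P,P)” is `(P-1,P-1)`), with edges `(i,j)→(i+1,j)` and
`(i,j)→(i,j+1)`. -/
def gridE (P : ℕ) (a b : Fin P × Fin P) : Prop :=
  ((b.1 : ℕ) = (a.1 : ℕ) + 1 ∧ b.2 = a.2) ∨
  (b.1 = a.1 ∧ (b.2 : ℕ) = (a.2 : ℕ) + 1)

open Finset

theorem SpookyStep.eq_insert_of_mem_of_notMem [DecidableEq V] {E : V → V → Prop}
    {A B SA SB : Finset V} (h : SpookyStep E A B SA SB) {u : V} (hB : u ∈ B) (hA : u ∉ A) :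
    B = insert u A ∧ ∀ w, E w u → w ∈ A := by
  obtain ⟨v, ⟨rfl, -, hpred⟩ | ⟨rfl, -, -⟩ | ⟨rfl, -⟩ | ⟨rfl, -, hpred⟩⟩ := h
  · obtain rfl : u = v := by simpa [hA] using hB
    exact ⟨rfl, hpred⟩
  · exact absurd (mem_of_mem_erase hB) hA
  · exact absurd (mem_of_mem_erase hB) hA
  · obtain rfl : u = v := by simpa [hA] using hB
    exact ⟨rfl, hpred⟩

theorem mem_rootFinset [Finite V] {E : V → V → Prop} {v : V} :
    v ∈ rootFinset E ↔ ∀ w, ¬E v w :=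
  Set.Finite.mem_toFinset _

theorem card_le_pebCost (Pf : ℕ → Finset V) {t T : ℕ} (ht : t ≤ T) :
    #(Pf t) ≤ pebCost Pf T :=
  le_sup (f := fun t => #(Pf t)) (mem_range.2 (Nat.lt_succ_of_le ht))

section Fresh

variable (Pf : ℕ → Finset V)

/-- `u` is placed at time `r`, by a pebble or an unghost move. -/
def IsFreshAt (u : V) (r : ℕ) : Prop := u ∈ Pf r ∧ u ∉ Pf (r - 1)

instance [DecidableEq V] (u : V) : DecidablePred (IsFreshAt Pf u) :=
  fun _ => inferInstanceAs (Decidable (_ ∧ _))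

variable {Pf}

theorem IsFreshAt.pos {u : V} {r : ℕ} (h : IsFreshAt Pf u r) : 0 < r :=
  Nat.pos_of_ne_zero fun hr => h.2 (by simpa [hr] using h.1)

theorem exists_isFreshAt_of_notMem_of_mem {u : V} {a b : ℕ} (hab : a ≤ b) (ha : u ∉ Pf a)
    (hb : u ∈ Pf b) : ∃ r, a < r ∧ r ≤ b ∧ IsFreshAt Pf u r := by
  induction b, hab using Nat.le_induction with
  | base => exact absurd hb ha
  | succ b hab ih =>
    by_cases hu : u ∈ Pf b
    · obtain ⟨r, har, hrb, hr⟩ := ih hu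
      exact ⟨r, har, hrb.trans b.le_succ, hr⟩
    · exact ⟨b + 1, by omega, le_rfl, hb, by simpa using hu⟩

end Fresh

section Boundary

variable [Fintype V] (E : V → V → Prop) [DecidableRel E]

def predFinset (S : Finset V) : Finset V := {p | ∃ c ∈ S, E p c}

variable {E} in
theorem mem_predFinset {S : Finset V} {p : V} : p ∈ predFinset E S ↔ ∃ c ∈ S, E p c := by
  simp [predFinset]

end Boundary

section PebbleTime

variable [Fintype V] [DecidableEq V] (E : V → V → Prop) [DecidableRel E]
  (Pf : ℕ → Finset V) (T : ℕ) (hE : WellFounded (flip E))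

/-- The time at which `u` is needed, given pebbling times `θ` of its successors; a root is needed
at the end. -/
def dueTime (θ : V → ℕ) (u : V) : ℕ :=
  if ∃ s, E u s then (univ.filter (E u)).sup θ else T + 1

/-- The last time before `u` is due at which `u` gets pebbled, by recursion from the roots. -/
noncomputable def pebbleTime : V → ℕ :=
  hE.fix fun u θ =>
    Nat.findGreatest (IsFreshAt Pf u) (dueTime E T (fun s => if h : E u s then θ s h else 0) u - 1)

variable {E Pf T}

local notation "θ" => pebbleTime E Pf T hE

theorem pebbleTime_eq (u : V) :
    θ u = Nat.findGreatest (IsFreshAt Pf u) (dueTime E T θ u - 1) := by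
  rw [pebbleTime, hE.fix_eq]
  congr 2
  unfold dueTime
  split_ifs
  · exact sup_congr rfl fun s hs => dif_pos (mem_filter.1 hs).2
  · rfl

variable {Sf : ℕ → Finset V}

theorem mem_dueTime_sub_one (hS : IsSpookyStrategy E Pf Sf T) {τ : V → ℕ} {u : V}
    (hτ : ∀ s, E u s → IsFreshAt Pf s (τ s) ∧ τ s ≤ T) :
    u ∈ Pf (dueTime E T τ u - 1) ∧ dueTime E T τ u ≤ T + 1 := by
  unfold dueTime
  split_ifs with hu
  · obtain ⟨s, hs, hsup⟩ :=
      exists_mem_eq_sup (univ.filter (E u)) (by simpa [Finset.Nonempty] using hu) τ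
    have hus : E u s := (mem_filter.1 hs).2
    obtain ⟨hfresh, hsT⟩ := hτ s hus
    rw [hsup]
    refine ⟨?_, by omega⟩
    exact ((hS.2.2.2.2 (τ s) hfresh.pos hsT).eq_insert_of_mem_of_notMem hfresh.1 hfresh.2).2 u hus
  · push Not at hu
    simpa [hS.2.2.1] using mem_rootFinset.2 hu

theorem pebbleTime_spec (hS : IsSpookyStrategy E Pf Sf T) (u : V) :
    IsFreshAt Pf u (θ u) ∧ θ u < dueTime E T θ u ∧ dueTime E T θ u ≤ T + 1 ∧
      u ∈ Pf (dueTime E T θ u - 1) := by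
  induction u using hE.induction with
  | _ u ih =>
    obtain ⟨hmem, hdue⟩ := mem_dueTime_sub_one hS fun s hs =>
      have := ih s hs
      ⟨this.1, by omega⟩
    obtain ⟨r, -, hr, hfresh⟩ :=
      exists_isFreshAt_of_notMem_of_mem (Nat.zero_le _) (by simp [hS.1]) hmem
    have hle := Nat.findGreatest_le (P := IsFreshAt Pf u) (dueTime E T θ u - 1)
    have := hfresh.pos
    rw [pebbleTime_eq]
    exact ⟨Nat.findGreatest_spec hr hfresh, by omega, hdue, hmem⟩

theorem pebbleTime_le (hS : IsSpookyStrategy E Pf Sf T) (u : V) : θ u ≤ T := by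
  have := pebbleTime_spec hE hS u
  omega

theorem mem_of_pebbleTime_le_of_lt_dueTime (hS : IsSpookyStrategy E Pf Sf T) {u : V} {r : ℕ}
    (h₁ : θ u ≤ r) (h₂ : r < dueTime E T θ u) : u ∈ Pf r := by
  obtain ⟨-, -, -, hmem⟩ := pebbleTime_spec hE hS u
  by_contra hr
  obtain ⟨r', hrr', hr', hfresh⟩ := exists_isFreshAt_of_notMem_of_mem (by omega) hr hmem
  exact Nat.findGreatest_is_greatest (by rw [← pebbleTime_eq]; omega) hr' hfresh

theorem pebbleTime_le_dueTime {u s : V} (hus : E u s) : θ s ≤ dueTime E T θ u := by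
  rw [dueTime, if_pos ⟨s, hus⟩]
  exact le_sup (by simpa using hus)

theorem mem_of_pebbleTime_le_of_lt (hS : IsSpookyStrategy E Pf Sf T) {u s : V} (hus : E u s)
    {r : ℕ} (h₁ : θ u ≤ r) (h₂ : r < θ s) : u ∈ Pf r :=
  mem_of_pebbleTime_le_of_lt_dueTime hE hS h₁ (h₂.trans_le (pebbleTime_le_dueTime hE hus))

theorem exists_pebbleTime_lt (hS : IsSpookyStrategy E Pf Sf T) {u : V} (hu : ∃ s, E u s) :
    ∃ s, E u s ∧ θ u < θ s := by
  obtain ⟨s, hs, hsup⟩ :=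
    exists_mem_eq_sup (univ.filter (E u)) (by simpa [Finset.Nonempty] using hu) θ
  have hlt := (pebbleTime_spec hE hS u).2.1
  rw [dueTime, if_pos hu, hsup] at hlt
  exact ⟨s, (mem_filter.1 hs).2, hlt⟩

theorem mem_pebbleTime_of_pred (hS : IsSpookyStrategy E Pf Sf T) {p u : V} (hpu : E p u) :
    p ∈ Pf (θ u) := by
  obtain ⟨hfresh, -⟩ := pebbleTime_spec hE hS u
  have hstep := hS.2.2.2.2 _ hfresh.pos (pebbleTime_le hE hS u)
  obtain ⟨hins, hpred⟩ := hstep.eq_insert_of_mem_of_notMem hfresh.1 hfresh.2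
  exact hins ▸ mem_insert_of_mem (hpred p hpu)

theorem predFinset_sdiff_subset (hS : IsSpookyStrategy E Pf Sf T) (t : ℕ) :
    predFinset E {c | t < θ c} \ ({c | t < θ c} : Finset V) ⊆ Pf t := by
  intro u hu
  obtain ⟨⟨s, hs, hus⟩, hu⟩ : (∃ s, t < θ s ∧ E u s) ∧ ¬t < θ u := by
    simpa [mem_predFinset] using hu
  exact mem_of_pebbleTime_le_of_lt hE hS hus (not_lt.1 hu) hs

end PebbleTime

theorem add_le_sum_Ico_add {a c : ℕ → ℕ} {m n : ℕ} (hmn : m ≤ n)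
    (h : ∀ ℓ, m ≤ ℓ → ℓ < n → c (ℓ + 1) + 1 ≤ a ℓ + c ℓ) :
    c n + (n - m) ≤ ∑ ℓ ∈ Ico m n, a ℓ + c m := by
  induction n, hmn using Nat.le_induction with
  | base => simp
  | succ n hmn ih =>
    have := ih fun ℓ h₁ h₂ => h ℓ h₁ (by omega)
    have := h n hmn (by omega)
    rw [sum_Ico_succ_top hmn]
    omega

section Grid

variable {P : ℕ}

instance (P : ℕ) : DecidableRel (gridE P) := fun _ _ => inferInstanceAs (Decidable (_ ∨ _))

def gridLevel (u : Fin P × Fin P) : ℕ := u.1 + u.2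

theorem gridLevel_le (u : Fin P × Fin P) : gridLevel u ≤ 2 * P - 2 := by
  have := u.1.isLt
  have := u.2.isLt
  unfold gridLevel
  omega

theorem gridLevel_of_gridE {u s : Fin P × Fin P} (h : gridE P u s) :
    gridLevel s = gridLevel u + 1 := by
  unfold gridLevel
  rcases h with ⟨h₁, h₂⟩ | ⟨h₁, h₂⟩ <;> simp only [h₁, h₂] <;> omega

theorem wellFounded_flip_gridE : WellFounded (flip (gridE P)) :=
  Subrelation.wf (r := InvImage (· < ·) fun u => 2 * P - 2 - gridLevel u)
    (fun {s u} (h : gridE P u s) => by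
      have := gridLevel_of_gridE h
      have := gridLevel_le s
      simp only [InvImage]
      omega)
    (measure _).wf

theorem exists_gridE_of_gridLevel_lt {u : Fin P × Fin P} (h : gridLevel u < 2 * P - 2) :
    ∃ s, gridE P u s := by
  by_cases hu : (u.1 : ℕ) + 1 < P
  · exact ⟨(⟨u.1 + 1, hu⟩, u.2), Or.inl ⟨rfl, rfl⟩⟩
  · have : (u.2 : ℕ) + 1 < P := by
      unfold gridLevel at h
      omega
    exact ⟨(u.1, ⟨u.2 + 1, this⟩), Or.inr ⟨rfl, rfl⟩⟩

theorem exists_gridE_of_gridLevel_pos {u : Fin P × Fin P} (h : 0 < gridLevel u) :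
    ∃ p, gridE P p u := by
  by_cases hu : 0 < (u.1 : ℕ)
  · exact ⟨(⟨u.1 - 1, by omega⟩, u.2), Or.inl ⟨by simp only; omega, rfl⟩⟩
  · unfold gridLevel at h
    exact ⟨(u.1, ⟨u.2 - 1, by omega⟩), Or.inr ⟨rfl, by simp only; omega⟩⟩

def gridLeft (c : Fin P × Fin P) : Fin P × Fin P :=
  (c.1, ⟨c.2 - 1, (Nat.sub_le _ _).trans_lt c.2.isLt⟩)

def gridDown (c : Fin P × Fin P) : Fin P × Fin P :=
  (⟨c.1 - 1, (Nat.sub_le _ _).trans_lt c.1.isLt⟩, c.2)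

theorem gridE_gridLeft {c : Fin P × Fin P} (h : 0 < (c.2 : ℕ)) : gridE P (gridLeft c) c :=
  Or.inr ⟨rfl, by simp only [gridLeft]; omega⟩

theorem gridE_gridDown {c : Fin P × Fin P} (h : 0 < (c.1 : ℕ)) : gridE P (gridDown c) c :=
  Or.inl ⟨by simp only [gridDown]; omega, rfl⟩

theorem pos_of_le_gridLevel {c : Fin P × Fin P} (h : P ≤ gridLevel c) :
    0 < (c.1 : ℕ) ∧ 0 < (c.2 : ℕ) := by
  have := c.1.isLt
  have := c.2.isLt
  unfold gridLevel at h
  omega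

/-- The left neighbours of `S` are distinct, and the lower neighbour of a lowest element of `S` is
none of them. -/
theorem card_add_one_le_card_predFinset {S : Finset (Fin P × Fin P)} (hS : S.Nonempty)
    (hlev : ∀ c ∈ S, P ≤ gridLevel c) : #S + 1 ≤ #(predFinset (gridE P) S) := by
  have hpos c (hc : c ∈ S) := pos_of_le_gridLevel (hlev c hc)
  obtain ⟨c₀, hc₀, hmin⟩ := S.exists_min_image (fun c => (c.1 : ℕ)) hS
  have hinj : Set.InjOn gridLeft (S : Set (Fin P × Fin P)) := by
    intro c hc c' hc' h
    have h₁ := congrArg Prod.fst h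
    have h₂ := congrArg (fun c => (c.2 : ℕ)) h
    have := (hpos c hc).2
    have := (hpos c' hc').2
    simp only [gridLeft] at h₁ h₂
    exact Prod.ext h₁ (Fin.ext (by omega))
  have hnot : gridDown c₀ ∉ S.image gridLeft := by
    simp only [mem_image, not_exists, not_and]
    intro c hc h
    have h₁ := congrArg (fun c => (c.1 : ℕ)) h
    have := hmin c hc
    have := (hpos c₀ hc₀).1
    simp only [gridLeft, gridDown] at h₁
    omega
  have hsub : insert (gridDown c₀) (S.image gridLeft) ⊆ predFinset (gridE P) S := by
    refine insert_subset (mem_predFinset.2 ⟨c₀, hc₀, gridE_gridDown (hpos c₀ hc₀).1⟩) ?_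
    simp only [image_subset_iff, mem_predFinset]
    exact fun c hc => ⟨c, hc, gridE_gridLeft (hpos c hc).2⟩
  calc #S + 1 = #(insert (gridDown c₀) (S.image gridLeft)) := by
        rw [card_insert_of_notMem hnot, card_image_of_injOn hinj]
    _ ≤ _ := card_le_card hsub

end Grid

section GridBoundary

variable {P : ℕ}

theorem le_gridLevel_of_mem_predFinset {X : Finset (Fin P × Fin P)}
    (hlow : ∀ c ∈ X, P ≤ gridLevel c) {u : Fin P × Fin P}
    (hu : u ∈ predFinset (gridE P) X) :
    P - 1 ≤ gridLevel u := by
  obtain ⟨c, hc, huc⟩ := mem_predFinset.1 hu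
  have := hlow c hc
  have := gridLevel_of_gridE huc
  omega

/-- Summing the expansion inequality over the levels `P - 1, …, 2P - 3` telescopes. -/
theorem le_card_predFinset_sdiff (hP : 2 ≤ P) {X : Finset (Fin P × Fin P)}
    (hlow : ∀ c ∈ X, P ≤ gridLevel c)
    (hlevels : ∀ ℓ, P ≤ ℓ → ℓ ≤ 2 * P - 2 → ∃ c ∈ X, gridLevel c = ℓ) :
    P ≤ #(predFinset (gridE P) X \ X) := by
  set B := predFinset (gridE P) X \ X
  have hstep ℓ (h₁ : P - 1 ≤ ℓ) (h₂ : ℓ < 2 * P - 2) :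
      #{c ∈ X | gridLevel c = ℓ + 1} + 1 ≤
        #{u ∈ B | gridLevel u = ℓ} + #{c ∈ X | gridLevel c = ℓ} := by
    obtain ⟨c, hc, hcl⟩ := hlevels (ℓ + 1) (by omega) (by omega)
    have hsub : predFinset (gridE P) {c ∈ X | gridLevel c = ℓ + 1} ⊆
        {u ∈ B | gridLevel u = ℓ} ∪ {c ∈ X | gridLevel c = ℓ} := by
      intro p hp
      obtain ⟨c, hc, hpc⟩ := mem_predFinset.1 hp
      rw [mem_filter] at hc
      have hpl : gridLevel p = ℓ := by
        have := gridLevel_of_gridE hpc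
        omega
      by_cases hpX : p ∈ X
      · exact mem_union_right _ (mem_filter.2 ⟨hpX, hpl⟩)
      · exact mem_union_left _ (mem_filter.2
          ⟨mem_sdiff.2 ⟨mem_predFinset.2 ⟨c, hc.1, hpc⟩, hpX⟩, hpl⟩)
    calc _ ≤ #(predFinset (gridE P) {c ∈ X | gridLevel c = ℓ + 1}) :=
          card_add_one_le_card_predFinset ⟨c, mem_filter.2 ⟨hc, hcl⟩⟩
            fun c hc => hlow c (mem_filter.1 hc).1
      _ ≤ _ := (card_le_card hsub).trans (card_union_le _ _)
  have htel := add_le_sum_Ico_add (a := fun ℓ => #{u ∈ B | gridLevel u = ℓ})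
    (c := fun ℓ => #{c ∈ X | gridLevel c = ℓ}) (by omega : P - 1 ≤ 2 * P - 2) hstep
  have hbottom : {c ∈ X | gridLevel c = P - 1} = ∅ :=
    filter_eq_empty_iff.2 fun c hc => by have := hlow c hc; omega
  have htop : 0 < #{c ∈ X | gridLevel c = 2 * P - 2} := by
    obtain ⟨c, hc, hcl⟩ := hlevels (2 * P - 2) (by omega) le_rfl
    exact card_pos.2 ⟨c, mem_filter.2 ⟨hc, hcl⟩⟩
  have hsum : ∑ ℓ ∈ Ico (P - 1) (2 * P - 2), #{u ∈ B | gridLevel u = ℓ} ≤ #B := by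
    rw [sum_card_fiberwise_eq_card_filter]
    exact card_filter_le _ _
  rw [hbottom, card_empty] at htel
  omega

variable {f : Fin P × Fin P → ℕ}

theorem exists_gridLevel_eq_lt
    (hf : ∀ u, (∃ s, gridE P u s) → ∃ s, gridE P u s ∧ f u < f s)
    {u : Fin P × Fin P} {k : ℕ} (hu : gridLevel u < k)
    (hk : k ≤ 2 * P - 2) : ∃ v, gridLevel v = k ∧ f u < f v := by
  induction k, Nat.succ_le_of_lt hu using Nat.le_induction with
  | base =>
    obtain ⟨s, hus, hlt⟩ := hf u (exists_gridE_of_gridLevel_lt (by omega))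
    exact ⟨s, gridLevel_of_gridE hus, hlt⟩
  | succ k hk' ih =>
    obtain ⟨v, hv, hlt⟩ := ih (by omega) (by omega)
    obtain ⟨s, hvs, hlt'⟩ := hf v (exists_gridE_of_gridLevel_lt (by omega))
    exact ⟨s, by rw [gridLevel_of_gridE hvs, hv], hlt.trans hlt'⟩

theorem le_gridLevel_of_lt
    (hf : ∀ u, (∃ s, gridE P u s) → ∃ s, gridE P u s ∧ f u < f s)
    {w c : Fin P × Fin P} (hw : ∀ u, gridLevel u = P - 1 → f u ≤ f w)
    (hc : f w < f c) : P ≤ gridLevel c := by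
  by_contra! hlev
  obtain hl | hl := (Nat.le_sub_one_of_lt hlev).eq_or_lt
  · exact (hw c hl).not_gt hc
  · obtain ⟨v, hv, hcv⟩ := exists_gridLevel_eq_lt hf hl (by omega)
    exact (hw v hv).not_gt (hc.trans hcv)

theorem le_card_insert_predFinset_sdiff (hP : 2 ≤ P)
    (hf : ∀ u, (∃ s, gridE P u s) → ∃ s, gridE P u s ∧ f u < f s)
    {w p : Fin P × Fin P} (hw : gridLevel w = P - 1)
    (hwmax : ∀ u, gridLevel u = P - 1 → f u ≤ f w) (hpw : gridE P p w) :
    P + 1 ≤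
      #(insert p (predFinset (gridE P) {c | f w < f c} \ ({c | f w < f c} : Finset _))) := by
  set X : Finset (Fin P × Fin P) := {c | f w < f c}
  have hlow c (hc : c ∈ X) : P ≤ gridLevel c := le_gridLevel_of_lt hf hwmax (mem_filter.1 hc).2
  have hB := le_card_predFinset_sdiff hP hlow fun ℓ _ hℓ => by
    obtain ⟨v, hv, hwv⟩ := exists_gridLevel_eq_lt hf (u := w) (by omega) hℓ
    exact ⟨v, mem_filter.2 ⟨mem_univ _, hwv⟩, hv⟩
  have hp : p ∉ predFinset (gridE P) X \ X := fun hp => by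
    have := le_gridLevel_of_mem_predFinset hlow (mem_sdiff.1 hp).1
    have := gridLevel_of_gridE hpw
    omega
  rw [card_insert_of_notMem hp]
  omega

end GridBoundary

/-- For every `P ≥ 2`, every spooky pebbling strategy on the grid DAG
`G◇_P` has pebbling cost at least `P + 1`. -/
theorem grid_spooky_lower (P : ℕ) (hP : 2 ≤ P)
    (Pf Sf : ℕ → Finset (Fin P × Fin P)) (T : ℕ)
    (hstrat : IsSpookyStrategy (gridE P) Pf Sf T) :
    P + 1 ≤ pebCost Pf T := by
  set θ := pebbleTime (gridE P) Pf T wellFounded_flip_gridE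
  obtain ⟨w, hw, hwmax⟩ := exists_max_image {u | gridLevel u = P - 1} θ
    ⟨(⟨P - 1, by omega⟩, ⟨0, by omega⟩),
      mem_filter.2 ⟨mem_univ _, by simp [gridLevel]⟩⟩
  have hwl : gridLevel w = P - 1 := (mem_filter.1 hw).2
  obtain ⟨p, hpw⟩ := exists_gridE_of_gridLevel_pos (u := w) (by omega)
  calc P + 1 ≤ #(insert p _) :=
        le_card_insert_predFinset_sdiff hP (fun u => exists_pebbleTime_lt _ hstrat) hwl
          (fun u hu => hwmax u (mem_filter.2 ⟨mem_univ _, hu⟩)) hpw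
    _ ≤ #(Pf (θ w)) := card_le_card <|
        insert_subset (mem_pebbleTime_of_pred _ hstrat hpw) (predFinset_sdiff_subset _ hstrat _)
    _ ≤ pebCost Pf T := card_le_pebCost Pf (pebbleTime_le _ hstrat w)
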